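/- arXiv:math/0607648 — 2 statements merged into one kernel-verified Lean document; each statement's English description precedes it below -/
import Mathlib

section
/- Let A ∈ ℝ^{n×⋯×n} be an order-k tensor with A ≥ 0 entrywise, n ≥ 2, and suppose that for some x ≥ 0 with ‖x‖_k = 1 all entries of A(I_n, x, …, x) are strictly less than μ x^{k−1} componentwise for some μ > 0 (in particular x > 0). Then there exists δ ∈ (0,1) such that x' = (1−δ)x, rescaled to unit l^k-norm, satisfies A(I_n, x', …, x') < μ' (x')^{k−1} for some μ' < μ; hence μ is not the infimum over the non-negative unit sphere of x ↦ inf{ν : A(I_n,x,…,x) ≤ ν x^{k−1}}. -/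
/-- `A(x, …, x, I_n, x, …, x)`: contraction against `x` in all modes except mode `i`. -/
def contrS {k n : ℕ} (A : (Fin k → Fin n) → ℝ) (i : Fin k) (x : Fin n → ℝ)
    (jf : Fin n) : ℝ :=
  ∑ j : Fin k → Fin n, if j i = jf then A j * ∏ l ∈ Finset.univ.erase i, x (j l) else 0

/-- The `lᵖ` norm on `ℝⁿ`. -/
noncomputable def lpnorm (p : ℝ) {n : ℕ} (x : Fin n → ℝ) : ℝ :=
  (∑ i, |x i| ^ p) ^ (1 / p)

lemma contrS_nonneg {k n : ℕ} (A : (Fin k → Fin n) → ℝ) (i : Fin k) (x : Fin n → ℝ)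
    (hA0 : ∀ j, 0 ≤ A j) (hx0 : ∀ j, 0 ≤ x j) (jf : Fin n) :
    0 ≤ contrS A i x jf := by
  apply Finset.sum_nonneg
  intro j _
  split
  · exact mul_nonneg (hA0 j) (Finset.prod_nonneg fun l _ => hx0 (j l))
  · exact le_refl 0

/-- if all components of `A(I_n, x, …, x)` are strictly below
`μ x^{k−1}` at some non-negative unit vector `x`, then `x' = (1−δ)x` rescaled to unit
`l^k`-norm satisfies the strict inequality with some `μ' < μ`; hence `μ` is not the
infimum over the non-negative unit sphere of `x ↦ inf{ν : A(I_n,x,…,x) ≤ ν x^{k−1}}`. -/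
theorem stmt15 {k n : ℕ} (hk : 2 ≤ k) (hn : 2 ≤ n) (A : (Fin k → Fin n) → ℝ)
    (hA0 : ∀ j, 0 ≤ A j)
    (x : Fin n → ℝ) (hx0 : ∀ j, 0 ≤ x j) (hx1 : lpnorm k x = 1)
    (μ : ℝ) (hμ : 0 < μ)
    (hstrict : ∀ jf, contrS A ⟨0, by omega⟩ x jf < μ * x jf ^ (k - 1)) :
    (∃ δ : ℝ, 0 < δ ∧ δ < 1 ∧ ∃ μ' : ℝ, μ' < μ ∧
      ∀ jf, contrS A ⟨0, by omega⟩ ((lpnorm k ((1 - δ) • x))⁻¹ • ((1 - δ) • x)) jf <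
        μ' * (((lpnorm k ((1 - δ) • x))⁻¹ • ((1 - δ) • x)) jf) ^ (k - 1)) ∧
    ∃ y : Fin n → ℝ, (∀ j, 0 ≤ y j) ∧ lpnorm k y = 1 ∧
      sInf {ν : ℝ | 0 ≤ ν ∧ ∀ jf, contrS A ⟨0, by omega⟩ y jf ≤ ν * y jf ^ (k - 1)} < μ := by
  set i : Fin k := ⟨0, by omega⟩
  have hC0 : ∀ jf, 0 ≤ contrS A i x jf := contrS_nonneg A i x hA0 hx0
  -- x is strictly positive
  have hxpos : ∀ jf, 0 < x jf := by
    intro jf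
    by_contra h
    have hx : x jf = 0 := le_antisymm (not_lt.mp h) (hx0 jf)
    have := hstrict jf
    rw [hx, zero_pow (by omega : k - 1 ≠ 0), mul_zero] at this
    exact absurd this (not_lt.mpr (hC0 jf))
  have hpowpos : ∀ jf, 0 < x jf ^ (k - 1) := fun jf => pow_pos (hxpos jf) _
  -- μ''
  haveI : Nonempty (Fin n) := ⟨⟨0, by omega⟩⟩
  have hne : (Finset.univ : Finset (Fin n)).Nonempty := Finset.univ_nonempty
  set μ'' : ℝ := Finset.univ.sup' hne (fun jf => contrS A i x jf / x jf ^ (k - 1)) with hμ''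
  have hμ''lt : μ'' < μ := by
    apply Finset.sup'_lt_iff hne |>.mpr
    intro jf _
    exact (div_lt_iff₀ (hpowpos jf)).mpr (hstrict jf)
  have hμ''le : ∀ jf, contrS A i x jf ≤ μ'' * x jf ^ (k - 1) := by
    intro jf
    have := Finset.le_sup' (fun jf => contrS A i x jf / x jf ^ (k - 1)) (Finset.mem_univ jf)
    exact (div_le_iff₀ (hpowpos jf)).mp this
  have hμ''0 : 0 ≤ μ'' := by
    have := Finset.le_sup' (fun jf => contrS A i x jf / x jf ^ (k - 1))
      (Finset.mem_univ (⟨0, by omega⟩ : Fin n))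
    exact le_trans (div_nonneg (hC0 _) (hpowpos _).le) this
  set μ' : ℝ := (μ'' + μ) / 2 with hμ'def
  have hμ'lt : μ' < μ := by rw [hμ'def]; linarith
  have hμ''ltμ' : μ'' < μ' := by rw [hμ'def]; linarith
  have hμ'0 : 0 ≤ μ' := by rw [hμ'def]; linarith
  have hstrict' : ∀ jf, contrS A i x jf < μ' * x jf ^ (k - 1) := by
    intro jf
    exact lt_of_le_of_lt (hμ''le jf)
      (mul_lt_mul_of_pos_right hμ''ltμ' (hpowpos jf))
  -- sum of |x i|^k = 1
  have hk0 : (k : ℝ) ≠ 0 := by positivity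
  have hSnn : (0:ℝ) ≤ ∑ j, |x j| ^ (k : ℝ) :=
    Finset.sum_nonneg fun j _ => Real.rpow_nonneg (abs_nonneg _) _
  have hS : ∑ j, |x j| ^ (k : ℝ) = 1 := by
    have h := hx1
    unfold lpnorm at h
    have := congrArg (fun t : ℝ => t ^ (k : ℝ)) h
    simp only [Real.one_rpow] at this
    rwa [← Real.rpow_mul hSnn, one_div, inv_mul_cancel₀ hk0, Real.rpow_one] at this
  -- rescaled vector equals x for δ = 1/2
  have hlp : lpnorm k ((1 - (1:ℝ)/2) • x) = 1/2 := by
    unfold lpnorm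
    have : ∀ j, |((1 - (1:ℝ)/2) • x) j| ^ (k:ℝ) = ((1:ℝ)/2) ^ (k:ℝ) * |x j| ^ (k:ℝ) := by
      intro j
      rw [Pi.smul_apply, smul_eq_mul, abs_mul, Real.mul_rpow (abs_nonneg _) (abs_nonneg _),
        show |1 - (1:ℝ)/2| = 1/2 by norm_num]
    rw [Finset.sum_congr rfl (fun j _ => this j), ← Finset.mul_sum, hS, mul_one,
      ← Real.rpow_mul (by norm_num), mul_one_div, div_self hk0, Real.rpow_one]
  have hvec : (lpnorm k ((1 - (1:ℝ)/2) • x))⁻¹ • ((1 - (1:ℝ)/2) • x) = x := by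
    rw [hlp, smul_smul]
    norm_num
  constructor
  · exact ⟨1/2, by norm_num, by norm_num, μ', hμ'lt, by rw [hvec]; exact hstrict'⟩
  · refine ⟨x, hx0, hx1, ?_⟩
    have hmem : μ' ∈ {ν : ℝ | 0 ≤ ν ∧ ∀ jf, contrS A i x jf ≤ ν * x jf ^ (k - 1)} :=
      ⟨hμ'0, fun jf => (hstrict' jf).le⟩
    have hbdd : BddBelow {ν : ℝ | 0 ≤ ν ∧ ∀ jf, contrS A i x jf ≤ ν * x jf ^ (k - 1)} :=
      ⟨0, fun ν hν => hν.1⟩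
    exact lt_of_le_of_lt (csInf_le hbdd hmem) hμ'lt
end

section
/- Let A ∈ ℝ^{n×⋯×n} with A ≥ 0 entrywise and define, for x in the compact set S₊ = {x ∈ ℝⁿ : x ≥ 0, ‖x‖_k = 1}, μ(x) = inf{μ ≥ 0 : A(I_n, x, …, x) ≤ μ x^{k−1} componentwise} (with μ(x) = +∞ if no such μ exists). Then the infimum μ* = inf{μ(x) : x ∈ S₊} is attained at some x* ∈ S₊. -/
open scoped ENNReal

/-- `μ(x) = inf{μ ≥ 0 : A(I_n, x, …, x) ≤ μ x^{k−1}}`, with value `+∞` if no such `μ`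
exists. -/
noncomputable def muFn {k n : ℕ} (hk : 2 ≤ k) (A : (Fin k → Fin n) → ℝ)
    (x : Fin n → ℝ) : ℝ≥0∞ :=
  sInf {m : ℝ≥0∞ | ∃ r : ℝ, 0 ≤ r ∧ m = ENNReal.ofReal r ∧
    ∀ jf, contrS A ⟨0, by omega⟩ x jf ≤ r * x jf ^ (k - 1)}

open Filter Topology

lemma contrS_continuous {k n : ℕ} (A : (Fin k → Fin n) → ℝ) (i : Fin k) (jf : Fin n) :
    Continuous fun x : Fin n → ℝ => contrS A i x jf := by
  unfold contrS
  apply continuous_finset_sum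
  intro j _
  by_cases h : j i = jf
  · simp only [h, if_true]
    exact continuous_const.mul (continuous_finset_prod _ fun l _ => continuous_apply _)
  · simp only [h, if_false]
    exact continuous_const

lemma lpnorm_eq_one_iff {k n : ℕ} (hk : 2 ≤ k) (x : Fin n → ℝ) (hx : ∀ j, 0 ≤ x j) :
    lpnorm k x = 1 ↔ ∑ i, x i ^ k = 1 := by
  have hk0 : (k : ℝ) ≠ 0 := by positivity
  have hsum : ∑ i, |x i| ^ (k : ℝ) = ∑ i, x i ^ k := by
    refine Finset.sum_congr rfl fun i _ => ?_
    rw [abs_of_nonneg (hx i), Real.rpow_natCast]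
  have hs0 : 0 ≤ ∑ i, x i ^ k := Finset.sum_nonneg fun i _ => pow_nonneg (hx i) k
  unfold lpnorm
  rw [hsum]
  constructor
  · intro h
    have := congrArg (fun t => t ^ (k : ℝ)) h
    simp only [Real.one_rpow] at this
    rwa [← Real.rpow_mul hs0, one_div, inv_mul_cancel₀ hk0, Real.rpow_one] at this
  · intro h
    rw [h, Real.one_rpow]

lemma S_isCompact {k n : ℕ} (hk : 2 ≤ k) :
    IsCompact {x : Fin n → ℝ | (∀ j, 0 ≤ x j) ∧ lpnorm k x = 1} := by
  have hset : {x : Fin n → ℝ | (∀ j, 0 ≤ x j) ∧ lpnorm k x = 1}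
      = {x : Fin n → ℝ | (∀ j, 0 ≤ x j) ∧ ∑ i, x i ^ k = 1} := by
    ext x
    simp only [Set.mem_setOf_eq]
    constructor
    · rintro ⟨h1, h2⟩; exact ⟨h1, (lpnorm_eq_one_iff hk x h1).1 h2⟩
    · rintro ⟨h1, h2⟩; exact ⟨h1, (lpnorm_eq_one_iff hk x h1).2 h2⟩
  rw [hset]
  apply Metric.isCompact_of_isClosed_isBounded
  · have h1 : IsClosed {x : Fin n → ℝ | ∀ j, 0 ≤ x j} := by
      have : {x : Fin n → ℝ | ∀ j, 0 ≤ x j} = ⋂ j, (fun x : Fin n → ℝ => x j) ⁻¹' Set.Ici 0 := by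
        ext x; simp [Set.mem_iInter]
      rw [this]
      exact isClosed_iInter fun j => isClosed_Ici.preimage (continuous_apply j)
    have h2 : IsClosed {x : Fin n → ℝ | ∑ i, x i ^ k = 1} :=
      isClosed_eq (continuous_finset_sum _ fun i _ => (continuous_apply i).pow k)
        continuous_const
    exact (h1.inter h2 : _)
  · apply Bornology.IsBounded.subset (Metric.isBounded_closedBall (x := (0 : Fin n → ℝ)) (r := 1))
    rintro x ⟨h1, h2⟩
    rw [Metric.mem_closedBall, dist_zero_right]
    rw [pi_norm_le_iff_of_nonneg zero_le_one]
    intro i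
    rw [Real.norm_eq_abs, abs_of_nonneg (h1 i)]
    have hle : x i ^ k ≤ 1 := by
      rw [← h2]
      exact Finset.single_le_sum (fun j _ => pow_nonneg (h1 j) k) (Finset.mem_univ i)
    exact (pow_le_one_iff_of_nonneg (h1 i) (by omega)).1 hle

/-- for an entrywise non-negative order-`k` tensor `A`, the infimum of
`μ(x)` over the compact set `S₊ = {x ≥ 0, ‖x‖_k = 1}` is attained. -/
theorem stmt16 {k n : ℕ} (hk : 2 ≤ k) (hn : 0 < n) (A : (Fin k → Fin n) → ℝ)
    (hA0 : ∀ j, 0 ≤ A j) :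
    ∃ x : Fin n → ℝ, (∀ j, 0 ≤ x j) ∧ lpnorm k x = 1 ∧
      ∀ y : Fin n → ℝ, (∀ j, 0 ≤ y j) → lpnorm k y = 1 →
        muFn hk A x ≤ muFn hk A y := by
  classical
  set S : Set (Fin n → ℝ) := {x : Fin n → ℝ | (∀ j, 0 ≤ x j) ∧ lpnorm k x = 1} with hS
  set M : ℝ≥0∞ := ⨅ (y : Fin n → ℝ) (_ : y ∈ S), muFn hk A y with hM
  have hMle : ∀ y ∈ S, M ≤ muFn hk A y := fun y hy => iInf₂_le y hy
  -- a sample point in S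
  have hx0 : (fun j : Fin n => if j = ⟨0, hn⟩ then (1:ℝ) else 0) ∈ S := by
    constructor
    · intro j; by_cases h : j = ⟨0, hn⟩ <;> simp [h]
    · rw [lpnorm_eq_one_iff hk _ (fun j => by by_cases h : j = ⟨0, hn⟩ <;> simp [h])]
      rw [Finset.sum_eq_single ⟨0, hn⟩]
      · simp
      · intro b _ hb; simp [hb, zero_pow (by omega : k ≠ 0)]
      · simp
  by_cases hMtop : M = ⊤
  · refine ⟨_, hx0.1, hx0.2, fun y hy1 hy2 => ?_⟩
    have := hMle y ⟨hy1, hy2⟩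
    rw [hMtop, top_le_iff] at this
    rw [this]; exact le_top
  -- choose a minimizing sequence
  have hseq : ∀ m : ℕ, ∃ y ∈ S, ∃ r : ℝ, 0 ≤ r ∧
      ENNReal.ofReal r < M + ENNReal.ofReal (1 / (m + 1)) ∧
      ∀ jf, contrS A ⟨0, by omega⟩ y jf ≤ r * y jf ^ (k - 1) := by
    intro m
    have hεpos : ENNReal.ofReal (1 / ((m:ℝ) + 1)) ≠ 0 := by
      simp only [ne_eq, ENNReal.ofReal_eq_zero, not_le]
      positivity
    have h1 : M < M + ENNReal.ofReal (1 / (m + 1)) := ENNReal.lt_add_right hMtop hεpos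
    have h2 : (⨅ (y : Fin n → ℝ) (_ : y ∈ S), muFn hk A y) < M + ENNReal.ofReal (1 / (m + 1)) :=
      hM ▸ h1
    rw [iInf_lt_iff] at h2
    obtain ⟨y, h2⟩ := h2
    rw [iInf_lt_iff] at h2
    obtain ⟨hyS, h2⟩ := h2
    rw [muFn, sInf_lt_iff] at h2
    obtain ⟨a, ⟨r, hr0, rfl, hr⟩, hlt⟩ := h2
    exact ⟨y, hyS, r, hr0, hlt, hr⟩
  choose y hyS r hr0 hrlt hrc using hseq
  -- bound on r
  have hrub : ∀ m : ℕ, r m ≤ M.toReal + 1 / (m + 1) := by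
    intro m
    have h1 : (ENNReal.ofReal (r m)).toReal ≤ (M + ENNReal.ofReal (1 / ((m:ℝ) + 1))).toReal := by
      apply ENNReal.toReal_mono
      · exact ENNReal.add_ne_top.2 ⟨hMtop, ENNReal.ofReal_ne_top⟩
      · exact (hrlt m).le
    rwa [ENNReal.toReal_add hMtop ENNReal.ofReal_ne_top, ENNReal.toReal_ofReal (hr0 m),
      ENNReal.toReal_ofReal (by positivity)] at h1
  have hrC : ∀ m : ℕ, r m ∈ Set.Icc (0:ℝ) (M.toReal + 1) := by
    intro m
    refine ⟨hr0 m, (hrub m).trans ?_⟩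
    have : 1 / ((m:ℝ) + 1) ≤ 1 := by
      rw [div_le_one (by positivity)]; linarith [Nat.cast_nonneg (α := ℝ) m]
    linarith
  -- extract a convergent subsequence
  have hcomp : IsCompact (S ×ˢ Set.Icc (0:ℝ) (M.toReal + 1)) :=
    (S_isCompact hk).prod isCompact_Icc
  obtain ⟨p, hpmem, φ, hφ, hφt⟩ :=
    hcomp.tendsto_subseq (x := fun m => (y m, r m)) (fun m => ⟨hyS m, hrC m⟩)
  obtain ⟨hp1S, hp2⟩ := hpmem
  have hxt : Tendsto (fun m => y (φ m)) atTop (𝓝 p.1) :=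
    (continuous_fst.tendsto p).comp hφt
  have hrt : Tendsto (fun m => r (φ m)) atTop (𝓝 p.2) :=
    (continuous_snd.tendsto p).comp hφt
  -- limit of the constraint
  have hconstr : ∀ jf, contrS A ⟨0, by omega⟩ p.1 jf ≤ p.2 * p.1 jf ^ (k - 1) := by
    intro jf
    refine le_of_tendsto_of_tendsto'
      (((contrS_continuous A ⟨0, by omega⟩ jf).tendsto p.1).comp hxt)
      (hrt.mul ((((continuous_apply jf).tendsto p.1).comp hxt).pow (k-1)))
      (fun m => hrc (φ m) jf)
  -- limit of the bound: p.2 ≤ M.toReal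
  have hp2le : p.2 ≤ M.toReal := by
    have hRt : Tendsto (fun m => M.toReal + 1 / ((φ m : ℝ) + 1)) atTop (𝓝 (M.toReal + 0)) :=
      tendsto_const_nhds.add (tendsto_one_div_add_atTop_nhds_zero_nat.comp hφ.tendsto_atTop)
    have := le_of_tendsto_of_tendsto' hrt hRt (fun m => hrub (φ m))
    simpa using this
  -- conclude
  refine ⟨p.1, hp1S.1, hp1S.2, fun z hz1 hz2 => ?_⟩
  have h1 : muFn hk A p.1 ≤ ENNReal.ofReal p.2 :=
    sInf_le ⟨p.2, hp2.1, rfl, hconstr⟩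
  have h2 : ENNReal.ofReal p.2 ≤ M := by
    calc ENNReal.ofReal p.2 ≤ ENNReal.ofReal M.toReal := ENNReal.ofReal_le_ofReal hp2le
    _ = M := ENNReal.ofReal_toReal hMtop
  exact (h1.trans h2).trans (hMle z ⟨hz1, hz2⟩)
end
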